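/- In the saddle-point setting, if η < 1/2 then ‖(H1 F⁻¹ − I) Bᵀ‖_{H2,H1⁻¹} ≤ C₁ η/(1 − η) ≤ 2 C₁ η. -/

import Mathlib

open Matrix

/-- The `H`-norm of a vector: `‖u‖_H = (uᵀ H u)^{1/2}`. -/
noncomputable def vnorm {α : Type*} [Fintype α] (H : Matrix α α ℝ) (u : α → ℝ) : ℝ :=
  Real.sqrt (u ⬝ᵥ (H *ᵥ u))

/-- The weighted operator norm `‖M‖_{H1,H2} = sup_{v ≠ 0} ‖M v‖_{H2} / ‖v‖_{H1}`.
For a square matrix, `‖M‖_H = wnorm H H M`; the spectral norm is `wnorm 1 1 M`. -/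
noncomputable def wnorm {α β : Type*} [Fintype α] [Fintype β]
    (H1 : Matrix α α ℝ) (H2 : Matrix β β ℝ) (M : Matrix β α ℝ) : ℝ :=
  sSup {r : ℝ | ∃ v : α → ℝ, v ≠ 0 ∧ r = vnorm H2 (M *ᵥ v) / vnorm H1 v}

/-!
Write `F = H1 + N`. Since `N` is skew, `vᵀ F v = ‖v‖²_{H1}`, and Cauchy–Schwarz between the
`H1`- and `H1⁻¹`-norms gives `‖F⁻¹ u‖_{H1} ≤ ‖u‖_{H1⁻¹}`; in particular `F` is invertible.
Moreover `H1 F⁻¹ - 1 = -N F⁻¹`, so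
`‖(H1 F⁻¹ - 1) Bᵀ x‖_{H1⁻¹} ≤ η ‖F⁻¹ Bᵀ x‖_{H1} ≤ η ‖Bᵀ x‖_{H1⁻¹} ≤ η C₁ ‖x‖_{H2}`,
the last step because `Bᵀ` is the adjoint of `B` for the dual pairs of weighted norms.
This gives even the bound `C₁ η`, and `C₁ η ≤ C₁ η / (1 - η) ≤ 2 C₁ η` for `0 ≤ η < 1/2`.
-/

section vnorm

variable {α : Type*} [Fintype α]

lemma vnorm_nonneg (H : Matrix α α ℝ) (u : α → ℝ) : 0 ≤ vnorm H u := Real.sqrt_nonneg _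

lemma vnorm_sq {H : Matrix α α ℝ} (hH : H.PosSemidef) (u : α → ℝ) :
    vnorm H u ^ 2 = u ⬝ᵥ (H *ᵥ u) :=
  Real.sq_sqrt (by simpa using hH.dotProduct_mulVec_nonneg u)

lemma vnorm_pos {H : Matrix α α ℝ} (hH : H.PosDef) {u : α → ℝ} (hu : u ≠ 0) :
    0 < vnorm H u :=
  Real.sqrt_pos.2 (by simpa using hH.dotProduct_mulVec_pos hu)

@[simp]
lemma vnorm_zero (H : Matrix α α ℝ) : vnorm H 0 = 0 := by
  simp [vnorm]

lemma vnorm_smul (H : Matrix α α ℝ) (c : ℝ) (u : α → ℝ) :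
    vnorm H (c • u) = |c| * vnorm H u := by
  rw [vnorm, vnorm, mulVec_smul, smul_dotProduct, dotProduct_smul, smul_eq_mul, smul_eq_mul,
    ← mul_assoc, ← pow_two, Real.sqrt_mul (sq_nonneg c), Real.sqrt_sq_eq_abs]

lemma vnorm_neg (H : Matrix α α ℝ) (u : α → ℝ) : vnorm H (-u) = vnorm H u := by
  simpa using vnorm_smul H (-1) u

lemma dotProduct_mulVec_le_vnorm_mul_vnorm {H : Matrix α α ℝ} (hH : H.PosSemidef)
    (a b : α → ℝ) : a ⬝ᵥ (H *ᵥ b) ≤ vnorm H a * vnorm H b := by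
  let normed := H.toSeminormedAddCommGroup hH
  let _ := H.toInnerProductSpace hH
  have hinner : ∀ u w : α → ℝ, inner ℝ u w = u ⬝ᵥ (H *ᵥ w) := fun u w => by
    rw [dotProduct_comm]; rfl
  have hnorm : ∀ u : α → ℝ, normed.norm u = vnorm H u := fun u => by
    rw [@norm_eq_sqrt_re_inner ℝ, RCLike.re_to_real, hinner, vnorm]
  simpa only [hinner, hnorm] using real_inner_le_norm a b

variable [DecidableEq α]

lemma vnorm_inv_mulVec {H : Matrix α α ℝ} (hH : IsUnit H.det) (u : α → ℝ) :
    vnorm H (H⁻¹ *ᵥ u) = vnorm H⁻¹ u := by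
  rw [vnorm, vnorm, mulVec_mulVec, mul_nonsing_inv _ hH, one_mulVec, dotProduct_comm]

lemma dotProduct_le_vnorm_mul_vnorm_inv {H : Matrix α α ℝ} (hH : H.PosDef) (w u : α → ℝ) :
    w ⬝ᵥ u ≤ vnorm H w * vnorm H⁻¹ u := by
  have hdet : IsUnit H.det := (isUnit_iff_isUnit_det H).mp hH.isUnit
  calc w ⬝ᵥ u = w ⬝ᵥ (H *ᵥ (H⁻¹ *ᵥ u)) := by
        rw [mulVec_mulVec, mul_nonsing_inv _ hdet, one_mulVec]
    _ ≤ vnorm H w * vnorm H (H⁻¹ *ᵥ u) :=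
        dotProduct_mulVec_le_vnorm_mul_vnorm hH.posSemidef _ _
    _ = vnorm H w * vnorm H⁻¹ u := by rw [vnorm_inv_mulVec hdet]

end vnorm

section wnorm

variable {α β : Type*} [Fintype α] [Fintype β]

lemma wnorm_nonneg (H1 : Matrix α α ℝ) (H2 : Matrix β β ℝ) (M : Matrix β α ℝ) :
    0 ≤ wnorm H1 H2 M := by
  refine Real.sSup_nonneg ?_
  rintro _ ⟨v, -, rfl⟩
  exact div_nonneg (vnorm_nonneg _ _) (vnorm_nonneg _ _)

/-- The ratio is invariant under scaling, so its values are those on the unit sphere, which is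
compact. -/
lemma bddAbove_vnorm_div_vnorm {H1 : Matrix α α ℝ} (hH1 : H1.PosDef) (H2 : Matrix β β ℝ)
    (M : Matrix β α ℝ) :
    BddAbove {r : ℝ | ∃ v : α → ℝ, v ≠ 0 ∧ r = vnorm H2 (M *ᵥ v) / vnorm H1 v} := by
  set f : (α → ℝ) → ℝ := fun v => vnorm H2 (M *ᵥ v) / vnorm H1 v
  have hcont : ContinuousOn f (Metric.sphere 0 1) := by
    refine ContinuousOn.div (by unfold vnorm; fun_prop) (by unfold vnorm; fun_prop) ?_
    intro v hv
    exact (vnorm_pos hH1 (ne_zero_of_mem_unit_sphere ⟨v, hv⟩)).ne'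
  refine ((isCompact_sphere 0 1).image_of_continuousOn hcont).bddAbove.mono ?_
  rintro _ ⟨v, hv, rfl⟩
  have hnv : ‖v‖ ≠ 0 := norm_ne_zero_iff.mpr hv
  refine ⟨‖v‖⁻¹ • v, by simp [norm_smul, hnv], ?_⟩
  simp only [f, mulVec_smul, vnorm_smul]
  exact mul_div_mul_left _ _ (by simpa using hnv)

lemma vnorm_mulVec_le_wnorm_mul {H1 : Matrix α α ℝ} (hH1 : H1.PosDef) (H2 : Matrix β β ℝ)
    (M : Matrix β α ℝ) (v : α → ℝ) :
    vnorm H2 (M *ᵥ v) ≤ wnorm H1 H2 M * vnorm H1 v := by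
  rcases eq_or_ne v 0 with rfl | hv
  · simp
  · rw [← div_le_iff₀ (vnorm_pos hH1 hv)]
    exact le_csSup (bddAbove_vnorm_div_vnorm hH1 H2 M) ⟨v, hv, rfl⟩

lemma wnorm_le_bound {H1 : Matrix α α ℝ} (hH1 : H1.PosDef) {H2 : Matrix β β ℝ}
    {M : Matrix β α ℝ} {c : ℝ} (hc : 0 ≤ c) (h : ∀ v, vnorm H2 (M *ᵥ v) ≤ c * vnorm H1 v) :
    wnorm H1 H2 M ≤ c := by
  refine Real.sSup_le ?_ hc
  rintro _ ⟨v, hv, rfl⟩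
  exact (div_le_iff₀ (vnorm_pos hH1 hv)).mpr (h v)

variable [DecidableEq α] [DecidableEq β]

lemma vnorm_transpose_mulVec_le {H1 : Matrix α α ℝ} {H2 : Matrix β β ℝ} (hH1 : H1.PosDef)
    (hH2 : H2.PosDef) (B : Matrix β α ℝ) (x : β → ℝ) :
    vnorm H1⁻¹ (Bᵀ *ᵥ x) ≤ wnorm H1 H2⁻¹ B * vnorm H2 x := by
  set v := H1⁻¹ *ᵥ (Bᵀ *ᵥ x)
  have hv : vnorm H1 v = vnorm H1⁻¹ (Bᵀ *ᵥ x) :=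
    vnorm_inv_mulVec ((isUnit_iff_isUnit_det H1).mp hH1.isUnit) _
  have hsq : vnorm H1⁻¹ (Bᵀ *ᵥ x) ^ 2 ≤
      wnorm H1 H2⁻¹ B * vnorm H2 x * vnorm H1⁻¹ (Bᵀ *ᵥ x) :=
    calc vnorm H1⁻¹ (Bᵀ *ᵥ x) ^ 2 = x ⬝ᵥ (B *ᵥ v) := by
          rw [vnorm_sq hH1.inv.posSemidef, dotProduct_mulVec x B v, ← mulVec_transpose]
      _ ≤ vnorm H2 x * vnorm H2⁻¹ (B *ᵥ v) := dotProduct_le_vnorm_mul_vnorm_inv hH2 _ _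
      _ ≤ vnorm H2 x * (wnorm H1 H2⁻¹ B * vnorm H1 v) := by
          gcongr
          · exact vnorm_nonneg _ _
          · exact vnorm_mulVec_le_wnorm_mul hH1 _ B v
      _ = wnorm H1 H2⁻¹ B * vnorm H2 x * vnorm H1⁻¹ (Bᵀ *ᵥ x) := by rw [hv]; ring
  nlinarith [vnorm_nonneg H1⁻¹ (Bᵀ *ᵥ x),
    mul_nonneg (wnorm_nonneg H1 H2⁻¹ B) (vnorm_nonneg H2 x)]

end wnorm

section coercive

variable {α : Type*} [Fintype α]

lemma dotProduct_mulVec_symmPart (F : Matrix α α ℝ) (v : α → ℝ) :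
    v ⬝ᵥ ((((1 : ℝ) / 2) • (F + Fᵀ)) *ᵥ v) = v ⬝ᵥ (F *ᵥ v) := by
  have hT : v ⬝ᵥ (Fᵀ *ᵥ v) = v ⬝ᵥ (F *ᵥ v) := by
    rw [mulVec_transpose, dotProduct_comm, dotProduct_mulVec]
  rw [smul_mulVec, add_mulVec, dotProduct_smul, dotProduct_add, hT, smul_eq_mul]
  ring

variable [DecidableEq α] {H F : Matrix α α ℝ}

lemma vnorm_le_vnorm_inv_mulVec (hH : H.PosDef)
    (hF : ∀ v, v ⬝ᵥ (F *ᵥ v) = v ⬝ᵥ (H *ᵥ v)) (w : α → ℝ) :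
    vnorm H w ≤ vnorm H⁻¹ (F *ᵥ w) := by
  have hsq : vnorm H w ^ 2 ≤ vnorm H w * vnorm H⁻¹ (F *ᵥ w) := by
    rw [vnorm_sq hH.posSemidef, ← hF]
    exact dotProduct_le_vnorm_mul_vnorm_inv hH _ _
  nlinarith [vnorm_nonneg H w, vnorm_nonneg H⁻¹ (F *ᵥ w)]

lemma isUnit_det_of_dotProduct_mulVec_eq (hH : H.PosDef)
    (hF : ∀ v, v ⬝ᵥ (F *ᵥ v) = v ⬝ᵥ (H *ᵥ v)) : IsUnit F.det := by
  refine isUnit_iff_ne_zero.mpr fun hdet => ?_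
  obtain ⟨v, hv, hFv⟩ := exists_mulVec_eq_zero_iff.mpr hdet
  have hle := vnorm_le_vnorm_inv_mulVec hH hF v
  rw [hFv, vnorm_zero] at hle
  exact (vnorm_pos hH hv).not_ge hle

lemma vnorm_inv_mulVec_le (hH : H.PosDef) (hF : ∀ v, v ⬝ᵥ (F *ᵥ v) = v ⬝ᵥ (H *ᵥ v))
    (u : α → ℝ) : vnorm H (F⁻¹ *ᵥ u) ≤ vnorm H⁻¹ u := by
  have hFu : F *ᵥ (F⁻¹ *ᵥ u) = u := by
    rw [mulVec_mulVec, mul_nonsing_inv _ (isUnit_det_of_dotProduct_mulVec_eq hH hF), one_mulVec]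
  simpa only [hFu] using vnorm_le_vnorm_inv_mulVec hH hF (F⁻¹ *ᵥ u)

end coercive

lemma le_div_one_sub_and_div_one_sub_le_two_mul {a η : ℝ} (ha : 0 ≤ a) (hη : 0 ≤ η)
    (hη2 : η < 1 / 2) : a ≤ a / (1 - η) ∧ a / (1 - η) ≤ 2 * a := by
  have h1η : 0 < 1 - η := by linarith
  constructor
  · rw [le_div_iff₀ h1η]
    nlinarith
  · rw [div_le_iff₀ h1η]
    nlinarith

theorem stmt_8_general
    {n m : ℕ} (F : Matrix (Fin n) (Fin n) ℝ) (B : Matrix (Fin m) (Fin n) ℝ)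
    (H1 N : Matrix (Fin n) (Fin n) ℝ) (H2 : Matrix (Fin m) (Fin m) ℝ)
    (η C₁ : ℝ)
    (hH1 : H1 = ((1 : ℝ)/2) • (F + Fᵀ)) (hN : N = ((1 : ℝ)/2) • (F - Fᵀ))
    (hH1pd : H1.PosDef) (hH2pd : H2.PosDef)
    (hNnorm : wnorm H1 H1⁻¹ N ≤ η)
    (hBnorm : wnorm H1 H2⁻¹ B ≤ C₁)
    (hsmall : η < 1/2) :
    wnorm H2 H1⁻¹ ((H1 * F⁻¹ - 1) * Bᵀ) ≤ C₁ * η / (1 - η) ∧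
    C₁ * η / (1 - η) ≤ 2 * C₁ * η := by
  have hF : ∀ v, v ⬝ᵥ (F *ᵥ v) = v ⬝ᵥ (H1 *ᵥ v) := fun v => by
    rw [hH1, dotProduct_mulVec_symmPart]
  have hη : 0 ≤ η := (wnorm_nonneg _ _ _).trans hNnorm
  have hC₁ : 0 ≤ C₁ := (wnorm_nonneg _ _ _).trans hBnorm
  have hsplit : (H1 * F⁻¹ - 1) * Bᵀ = -(N * F⁻¹ * Bᵀ) := by
    have hH1N : H1 = F - N := by rw [hH1, hN]; module
    rw [hH1N, Matrix.sub_mul F N, mul_nonsing_inv _ (isUnit_det_of_dotProduct_mulVec_eq hH1pd hF),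
      sub_sub_cancel_left, Matrix.neg_mul]
  have hbound : wnorm H2 H1⁻¹ ((H1 * F⁻¹ - 1) * Bᵀ) ≤ C₁ * η := by
    refine wnorm_le_bound hH2pd (by positivity) fun x => ?_
    rw [hsplit, neg_mulVec, vnorm_neg, ← mulVec_mulVec, ← mulVec_mulVec]
    calc vnorm H1⁻¹ (N *ᵥ (F⁻¹ *ᵥ (Bᵀ *ᵥ x))) ≤ η * vnorm H1 (F⁻¹ *ᵥ (Bᵀ *ᵥ x)) :=
          (vnorm_mulVec_le_wnorm_mul hH1pd _ N _).trans (by gcongr; exact vnorm_nonneg _ _)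
      _ ≤ η * vnorm H1⁻¹ (Bᵀ *ᵥ x) := by gcongr; exact vnorm_inv_mulVec_le hH1pd hF _
      _ ≤ η * (C₁ * vnorm H2 x) := by
          gcongr
          exact (vnorm_transpose_mulVec_le hH1pd hH2pd B x).trans
            (by gcongr; exact vnorm_nonneg _ _)
      _ = C₁ * η * vnorm H2 x := by ring
  obtain ⟨hle, hle_two⟩ :=
    le_div_one_sub_and_div_one_sub_le_two_mul (mul_nonneg hC₁ hη) hη hsmall
  exact ⟨hbound.trans hle, by rwa [mul_assoc]⟩

theorem stmt_8
    {n m : ℕ} (F : Matrix (Fin n) (Fin n) ℝ) (B : Matrix (Fin m) (Fin n) ℝ)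
    (H1 N : Matrix (Fin n) (Fin n) ℝ) (H2 : Matrix (Fin m) (Fin m) ℝ)
    (η C₁ C₂ : ℝ) (hη : 0 < η) (hC1 : 0 < C₁) (hC2 : 0 < C₂)
    (hH1 : H1 = ((1 : ℝ)/2) • (F + Fᵀ)) (hN : N = ((1 : ℝ)/2) • (F - Fᵀ))
    (hH1pd : H1.PosDef) (hH2pd : H2.PosDef)
    (hBrank : B.rank = m)
    (hNnorm : wnorm H1 H1⁻¹ N ≤ η)
    (hBnorm : wnorm H1 H2⁻¹ B ≤ C₁)
    (hinfsup : ∀ x : Fin m → ℝ, x ≠ 0 → C₂ * vnorm H2 x ≤ vnorm H1⁻¹ (Bᵀ *ᵥ x))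
    (hsmall : η < 1/2) :
    wnorm H2 H1⁻¹ ((H1 * F⁻¹ - 1) * Bᵀ) ≤ C₁ * η / (1 - η) ∧
    C₁ * η / (1 - η) ≤ 2 * C₁ * η :=
  stmt_8_general F B H1 N H2 η C₁ hH1 hN hH1pd hH2pd hNnorm hBnorm hsmall
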